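/- arXiv:1602.07775 — 2 statements merged into one kernel-verified Lean document; each statement's English description precedes it below -/
import Mathlib

section
/- Let A(t) be an n×n matrix over ℚ[t,t⁻¹] whose first row equals (t-1)·(a₁₁, …, a₁ₙ) and whose first column below the (1,1)-entry equals (t-1)·(a₂₁, …, aₙ₁)ᵀ, with integer aᵢⱼ, and whose lower-right (n-1)×(n-1) block X(t) satisfies X(1) = I. Then det A(t) is divisible by (t-1) in ℚ[t,t⁻¹], and (det A(t)/(t-1)) evaluated at t = 1 equals a₁₁. -/
open LaurentPolynomial

/-- Evaluation of a Laurent polynomial over ℚ at `t = 1`. -/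
noncomputable def evalOneQ : LaurentPolynomial ℚ →+* ℚ :=
  AddMonoidAlgebra.liftNCRingHom (RingHom.id ℚ) 1 (fun _ _ => Commute.all _ _)

/-!
Factoring `t - 1` out of the first row writes `det A = (t - 1) · det B`, where `B` is `A` with
its first row replaced by `(a₀₀, …, a₀ₙ)`. At `t = 1` the first column of `B` below the corner
vanishes and its lower-right block becomes the identity, so `det B` evaluates to `a₀₀`.
-/

lemma evalOneQ_single (m : ℤ) (r : ℚ) : evalOneQ (AddMonoidAlgebra.single m r) = r := by
  change AddMonoidAlgebra.liftNC _ _ (AddMonoidAlgebra.single m r) = r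
  rw [AddMonoidAlgebra.liftNC_single]
  simp

lemma evalOneQ_T_sub_one : evalOneQ (T 1 - 1) = 0 := by
  rw [map_sub, map_one, T, evalOneQ_single, sub_self]

namespace Matrix

variable {R : Type*} [CommRing R]

lemma det_eq_mul_det_updateRow {m : Type*} [Fintype m] [DecidableEq m] (A : Matrix m m R)
    (i : m) (x : R) (c : m → R) (hrow : A i = x • c) :
    A.det = x * (A.updateRow i c).det := by
  rw [← det_updateRow_smul, ← hrow, updateRow_eq_self]

lemma det_eq_mul_det_submatrix_succ_of_col_zero_eq_zero {n : ℕ}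
    (M : Matrix (Fin (n + 1)) (Fin (n + 1)) R) (hcol : ∀ i : Fin n, M i.succ 0 = 0) :
    M.det = M 0 0 * (M.submatrix Fin.succ Fin.succ).det := by
  rw [det_succ_column_zero, Fin.sum_univ_succ, Finset.sum_eq_zero fun i _ => by simp [hcol i]]
  simp

end Matrix

/-- If the first row of `A(t)` is `(t-1)·(a₀₀,…,a₀ₙ)`, the first column below the
corner is `(t-1)·(a₁₀,…,aₙ₀)`, with integer `aᵢⱼ`, and the lower-right block
evaluates at `t = 1` to the identity, then `det A` is divisible by `t - 1` and
`(det A / (t-1))` evaluated at `t = 1` equals `a₀₀`. -/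
theorem det_div_t_sub_one_eval {n : ℕ}
    (A : Matrix (Fin (n + 1)) (Fin (n + 1)) (LaurentPolynomial ℚ))
    (a : Fin (n + 1) → Fin (n + 1) → ℤ)
    (hrow : ∀ j, A 0 j = (T 1 - 1) * C ((a 0 j : ℚ)))
    (hcol : ∀ i : Fin n, A i.succ 0 = (T 1 - 1) * C ((a i.succ 0 : ℚ)))
    (hX : (A.submatrix Fin.succ Fin.succ).map evalOneQ = 1) :
    ∃ D : LaurentPolynomial ℚ, A.det = (T 1 - 1) * D ∧ evalOneQ D = (a 0 0 : ℚ) := by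
  set B := A.updateRow 0 fun j => C (a 0 j : ℚ)
  refine ⟨B.det, A.det_eq_mul_det_updateRow 0 _ _ (funext hrow), ?_⟩
  have hBcol : ∀ i : Fin n, (B.map evalOneQ) i.succ 0 = 0 := fun i => by
    simp [B, hcol i, evalOneQ_T_sub_one]
  have hBX : (B.map evalOneQ).submatrix Fin.succ Fin.succ = 1 := by
    rw [Matrix.submatrix_map, ← Fin.succAbove_zero, Matrix.submatrix_updateRow_succAbove,
      Fin.succAbove_zero, hX]
  rw [RingHom.map_det, RingHom.mapMatrix_apply,
    Matrix.det_eq_mul_det_submatrix_succ_of_col_zero_eq_zero _ hBcol, hBX]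
  simp [B]
end

section
/- Let A(s) be an n×n matrix over ℚ[s,s⁻¹] whose first row equals (s - s⁻¹)·(a₁₁, …, a₁ₙ) and whose first column below the (1,1)-entry equals (s - s⁻¹)·(a₂₁, …, aₙ₁)ᵀ, with integer aᵢⱼ, and whose lower-right (n-1)×(n-1) block Q(s) satisfies det Q(1) = 1. Then det A(s) is divisible by (s - s⁻¹), and (det A(s)/(s - s⁻¹)) evaluated at s = 1 equals a₁₁. -/
open LaurentPolynomial

lemma evalOneQ_C (r : ℚ) : evalOneQ (C r) = r := evalOneQ_single 0 r

lemma evalOneQ_T (m : ℤ) : evalOneQ (T m) = 1 := evalOneQ_single m 1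

lemma evalOneQ_T_one_sub_T_neg_one : evalOneQ (T 1 - T (-1)) = 0 := by
  rw [map_sub, evalOneQ_T, evalOneQ_T, sub_self]

namespace Matrix

variable {R S : Type*} [CommRing R] [CommRing S] {n : ℕ}

lemma det_succ_row_zero_of_row_eq_mul (A : Matrix (Fin (n + 1)) (Fin (n + 1)) R) (d : R)
    (r : Fin (n + 1) → R) (hrow : ∀ j, A 0 j = d * r j) :
    A.det = d * ∑ j : Fin (n + 1), (-1) ^ (j : ℕ) * r j * (A.submatrix Fin.succ j.succAbove).det := by
  rw [det_succ_row_zero, Finset.mul_sum]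
  refine Finset.sum_congr rfl fun j _ => ?_
  rw [hrow j]
  ring

lemma map_det_submatrix_succ_succAbove_succ_eq_zero (f : R →+* S)
    (A : Matrix (Fin (n + 1)) (Fin (n + 1)) R) (hcol : ∀ i : Fin n, f (A i.succ 0) = 0)
    (j : Fin n) : f (A.submatrix Fin.succ j.succ.succAbove).det = 0 := by
  rw [RingHom.map_det, RingHom.mapMatrix_apply]
  have : NeZero n := ⟨j.pos.ne'⟩
  refine det_eq_zero_of_column_eq_zero 0 fun i => ?_
  simpa only [map_apply, submatrix_apply, Fin.succ_succAbove_zero] using hcol i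

lemma map_sum_succAbove_minors_eq (f : R →+* S) (A : Matrix (Fin (n + 1)) (Fin (n + 1)) R)
    (r : Fin (n + 1) → R) (hcol : ∀ i : Fin n, f (A i.succ 0) = 0) :
    f (∑ j : Fin (n + 1), (-1) ^ (j : ℕ) * r j * (A.submatrix Fin.succ j.succAbove).det) =
      f (r 0) * ((A.submatrix Fin.succ Fin.succ).map f).det := by
  have hminor := map_det_submatrix_succ_succAbove_succ_eq_zero f A hcol
  simp [Fin.sum_univ_succ, hminor, RingHom.map_det, Fin.succAbove_zero]

end Matrix

/-- If the first row of `A(s)` is `(s - s⁻¹)·(a₀₀,…,a₀ₙ)`, the first column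
below the corner is `(s - s⁻¹)·(a₁₀,…,aₙ₀)`, with integer `aᵢⱼ`, and the
lower-right block `Q(s)` satisfies `det Q(1) = 1`, then `det A` is divisible by
`s - s⁻¹`, and `(det A / (s - s⁻¹))` evaluated at `s = 1` equals `a₀₀`. -/
theorem det_div_s_sub_sinv_eval {n : ℕ}
    (A : Matrix (Fin (n + 1)) (Fin (n + 1)) (LaurentPolynomial ℚ))
    (a : Fin (n + 1) → Fin (n + 1) → ℤ)
    (hrow : ∀ j, A 0 j = (T 1 - T (-1)) * C ((a 0 j : ℚ)))
    (hcol : ∀ i : Fin n, A i.succ 0 = (T 1 - T (-1)) * C ((a i.succ 0 : ℚ)))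
    (hQ : ((A.submatrix Fin.succ Fin.succ).map evalOneQ).det = 1) :
    ∃ D : LaurentPolynomial ℚ,
      A.det = (T 1 - T (-1)) * D ∧ evalOneQ D = (a 0 0 : ℚ) := by
  have hcol_eval : ∀ i : Fin n, evalOneQ (A i.succ 0) = 0 := fun i => by
    rw [hcol i, map_mul, evalOneQ_T_one_sub_T_neg_one, zero_mul]
  refine ⟨_, A.det_succ_row_zero_of_row_eq_mul _ (fun j => C (a 0 j : ℚ)) hrow, ?_⟩
  rw [Matrix.map_sum_succAbove_minors_eq evalOneQ A _ hcol_eval, hQ, evalOneQ_C, mul_one]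
end
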